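/- Let m₁, m₂ ≥ 1 and let P ⊆ {1,…,m₁}×{1,…,m₂} be a sparsity pattern. Define the generic rank of P as the maximum of rank(M) over all real m₁×m₂ matrices M with M_{ij} = 0 for (i,j) ∉ P, and define a matching of P as a subset S ⊆ P in which no two pairs share a first coordinate and no two pairs share a second coordinate. Then the generic rank of P equals the maximum cardinality of a matching of P. -/

import Mathlib

/-!
A matrix of rank `r` has an `r × r` submatrix with nonzero determinant (take `r` independent
columns, then `r` independent rows among them). Some term of the Leibniz expansion of that
determinant is nonzero, and its `r` entries form a matching inside the support. Conversely, the
`0/1` matrix of a matching `S` contains the identity of size `|S|` as a submatrix, so its rank is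
at least `|S|`.
-/

open Function

def Finset.IsMatching {α β : Type*} (S : Finset (α × β)) : Prop :=
  ∀ p ∈ S, ∀ q ∈ S, (p.1 = q.1 ∨ p.2 = q.2) → p = q

namespace Matrix

variable {K m n : Type*} [Field K]

theorem exists_linearIndependent_cols_of_rank_eq [Fintype n] (M : Matrix m n K) {r : ℕ}
    (hr : M.rank = r) : ∃ g : Fin r → n, LinearIndependent K (M.submatrix id g).col := by
  obtain ⟨κ, a, ha, hspan, hli⟩ := exists_linearIndependent' K M.col
  have : Finite κ := Finite.of_injective a ha
  have : Fintype κ := Fintype.ofFinite κ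
  have hcard : Fintype.card κ = r := by
    rw [← hr, rank_eq_finrank_span_cols, ← hspan, finrank_span_eq_card hli]
  exact ⟨a ∘ (Fintype.equivFinOfCardEq hcard).symm, hli.comp _ (Equiv.injective _)⟩

theorem exists_submatrix_det_ne_zero [Fintype m] [Fintype n] (M : Matrix m n K) :
    ∃ f : Fin M.rank → m, ∃ g : Fin M.rank → n, (M.submatrix f g).det ≠ 0 := by
  obtain ⟨g, hg⟩ := M.exists_linearIndependent_cols_of_rank_eq rfl
  have hrank : (M.submatrix id g)ᵀ.rank = M.rank := by
    rw [← row_transpose] at hg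
    rw [hg.rank_matrix, Fintype.card_fin]
  obtain ⟨f, hf⟩ := (M.submatrix id g)ᵀ.exists_linearIndependent_cols_of_rank_eq hrank
  have hunit : IsUnit (M.submatrix f g)ᵀ := linearIndependent_cols_iff_isUnit.mp hf
  rw [isUnit_transpose, isUnit_iff_isUnit_det] at hunit
  exact ⟨f, g, hunit.ne_zero⟩

theorem injective_of_det_submatrix_ne_zero {R r : Type*} [CommRing R] [Fintype r] [DecidableEq r]
    {M : Matrix m n R} {f : r → m} {g : r → n} (h : (M.submatrix f g).det ≠ 0) :
    Injective f ∧ Injective g := by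
  constructor
  · intro i j hij
    by_contra hne
    exact h (det_zero_of_row_eq hne (by ext k; simp [hij]))
  · intro i j hij
    by_contra hne
    exact h (det_zero_of_column_eq hne (by simp [hij]))

theorem exists_perm_prod_ne_zero_of_det_ne_zero {R r : Type*} [CommRing R] [Fintype r]
    [DecidableEq r] {A : Matrix r r R} (h : A.det ≠ 0) :
    ∃ σ : Equiv.Perm r, ∏ i, A (σ i) i ≠ 0 := by
  contrapose! h
  rw [det_apply]
  exact Finset.sum_eq_zero fun σ _ => by rw [h σ, smul_zero]

theorem exists_injective_apply_ne_zero [Fintype m] [Fintype n] (M : Matrix m n K) :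
    ∃ f : Fin M.rank → m, ∃ g : Fin M.rank → n,
      Injective f ∧ Injective g ∧ ∀ i, M (f i) (g i) ≠ 0 := by
  obtain ⟨f, g, hdet⟩ := M.exists_submatrix_det_ne_zero
  obtain ⟨hf, hg⟩ := injective_of_det_submatrix_ne_zero hdet
  obtain ⟨σ, hσ⟩ := exists_perm_prod_ne_zero_of_det_ne_zero hdet
  exact ⟨f ∘ σ, g, hf.comp σ.injective, hg,
    fun i => Finset.prod_ne_zero_iff.mp hσ i (Finset.mem_univ i)⟩

theorem exists_isMatching_card_eq_rank [Fintype m] [Fintype n] [DecidableEq m] [DecidableEq n]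
    (M : Matrix m n K) :
    ∃ S : Finset (m × n), S.IsMatching ∧ (∀ p ∈ S, M p.1 p.2 ≠ 0) ∧ S.card = M.rank := by
  obtain ⟨f, g, hf, hg, hne⟩ := M.exists_injective_apply_ne_zero
  have hfg : Injective fun i => (f i, g i) := fun i j h => hf (congrArg Prod.fst h)
  refine ⟨Finset.univ.image fun i => (f i, g i), ?_, ?_, ?_⟩
  · simp only [Finset.IsMatching, Finset.mem_image, Finset.mem_univ, true_and]
    rintro _ ⟨i, rfl⟩ _ ⟨j, rfl⟩ (h | h)
    · rw [hf h]
    · rw [hg h]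
  · simpa using hne
  · rw [Finset.card_image_of_injective _ hfg, Finset.card_univ, Fintype.card_fin]

end Matrix

theorem Finset.IsMatching.card_le_rank {K m n : Type*} [Field K] [Fintype m] [Fintype n]
    [DecidableEq m] [DecidableEq n] {S : Finset (m × n)} (hS : S.IsMatching) :
    S.card ≤ (Matrix.of fun i j => if (i, j) ∈ S then (1 : K) else 0).rank := by
  set A : Matrix m n K := Matrix.of fun i j => if (i, j) ∈ S then 1 else 0
  set e : Fin S.card ≃ S := S.equivFin.symm
  have hdiag : ∀ i j, ((e i).1.1, (e j).1.2) ∈ S → i = j := by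
    intro i j hij
    have hi := hS _ hij _ (e i).2 (Or.inl rfl)
    have hj := hS _ hij _ (e j).2 (Or.inr rfl)
    exact e.injective (Subtype.ext (hi.symm.trans hj))
  have hone : A.submatrix (fun i => (e i).1.1) (fun j => (e j).1.2) = 1 := by
    ext i j
    by_cases hij : i = j
    · subst hij
      simp [A]
    · simp [A, hij, mt (hdiag i j) hij]
  calc S.card = (A.submatrix (fun i => (e i).1.1) (fun j => (e j).1.2)).rank := by
        rw [hone, Matrix.rank_one, Fintype.card_fin]
    _ ≤ A.rank := A.rank_submatrix_le _ _

theorem generic_rank_eq_max_matching_general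
    (m₁ m₂ : ℕ)
    (P : Finset (Fin m₁ × Fin m₂)) :
    sSup {r : ℕ | ∃ M : Matrix (Fin m₁) (Fin m₂) ℝ,
        (∀ i j, (i, j) ∉ P → M i j = 0) ∧ M.rank = r}
    =
    sSup {c : ℕ | ∃ S : Finset (Fin m₁ × Fin m₂), S ⊆ P ∧
        (∀ p ∈ S, ∀ q ∈ S, (p.1 = q.1 ∨ p.2 = q.2) → p = q) ∧
        S.card = c} := by
  apply le_antisymm
  · refine csSup_le ⟨0, 0, fun _ _ _ => rfl, Matrix.rank_zero⟩ ?_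
    rintro _ ⟨M, hM, rfl⟩
    obtain ⟨S, hS, hSM, hcard⟩ := M.exists_isMatching_card_eq_rank
    refine le_csSup ⟨P.card, ?_⟩ ⟨S, fun p hp => ?_, hS, hcard⟩
    · rintro _ ⟨T, hTP, -, rfl⟩
      exact Finset.card_le_card hTP
    · by_contra hpP
      exact hSM p hp (hM _ _ hpP)
  · refine csSup_le ⟨0, ∅, Finset.empty_subset P, by simp, rfl⟩ ?_
    rintro _ ⟨S, hSP, hS, rfl⟩
    refine le_csSup_of_le ⟨m₁, ?_⟩ ⟨_, fun i j hij => if_neg fun h => hij (hSP h), rfl⟩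
      (Finset.IsMatching.card_le_rank hS)
    rintro _ ⟨M, -, rfl⟩
    exact M.rank_le_height

/-- For a sparsity pattern `P ⊆ {1,…,m₁} × {1,…,m₂}`, the generic rank
(the maximum of `rank M` over all real `m₁ × m₂` matrices supported on `P`) equals the
maximum cardinality of a matching of `P` (a subset of `P` in which no two pairs share a
first coordinate and no two pairs share a second coordinate). -/
theorem generic_rank_eq_max_matching
    (m₁ m₂ : ℕ) (h₁ : 1 ≤ m₁) (h₂ : 1 ≤ m₂)
    (P : Finset (Fin m₁ × Fin m₂)) :
    sSup {r : ℕ | ∃ M : Matrix (Fin m₁) (Fin m₂) ℝ,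
        (∀ i j, (i, j) ∉ P → M i j = 0) ∧ M.rank = r}
    =
    sSup {c : ℕ | ∃ S : Finset (Fin m₁ × Fin m₂), S ⊆ P ∧
        (∀ p ∈ S, ∀ q ∈ S, (p.1 = q.1 ∨ p.2 = q.2) → p = q) ∧
        S.card = c} :=
  generic_rank_eq_max_matching_general m₁ m₂ P
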